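/- arXiv:2605.25976 — 2 statements merged into one kernel-verified Lean document; each statement's English description precedes it below -/
import Mathlib

section
/- Let M be a finite multiset of vectors in ℚ^n with M = -M, let λ : ℚ^n → ℚ be a linear functional, and let J be a sub-multiset of M^{λ<0} = {v ∈ M : λ(v) < 0}. Then the vector x = −(1/2) ∑_{v ∈ M : λ(v) > 0} v − ∑_{v ∈ J} v lies in the set { ∑_{v ∈ M : λ(v) ≠ 0} s_v v : 0 ≤ s_v ≤ 1/2 }, i.e. in the Minkowski sum (1/2) ∑_{v ∈ M, λ(v) ≠ 0} [0, v]. -/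
open scoped Classical

lemma aux_le_map {α β : Type*} {f : α → β} :
    ∀ (s : Multiset α) (t : Multiset β), t ≤ s.map f → ∃ u ≤ s, u.map f = t := by
  intro s
  induction s using Multiset.induction with
  | empty =>
    intro t ht
    simp only [Multiset.map_zero, Multiset.le_zero] at ht
    exact ⟨0, le_refl _, by simp [ht]⟩
  | cons a s ih =>
    intro t ht
    rw [Multiset.map_cons] at ht
    by_cases hfa : f a ∈ t
    · have h1 : t.erase (f a) ≤ s.map f := by
        have := Multiset.erase_le_erase (f a) ht
        rwa [Multiset.erase_cons_head] at this
      obtain ⟨u, hu, hum⟩ := ih _ h1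
      refine ⟨a ::ₘ u, Multiset.cons_le_cons _ hu, ?_⟩
      rw [Multiset.map_cons, hum, Multiset.cons_erase hfa]
    · have h1 : t ≤ s.map f := by
        rw [Multiset.le_iff_count] at ht ⊢
        intro b
        rcases eq_or_ne b (f a) with rfl | hb
        · simp [Multiset.count_eq_zero_of_notMem hfa]
        · have := ht b
          rwa [Multiset.count_cons_of_ne hb] at this
      obtain ⟨u, hu, hum⟩ := ih _ h1
      exact ⟨u, le_trans hu (Multiset.le_cons_self _ _), hum⟩

theorem neg_vlambda_sub_vJ_mem_polytope (n : ℕ) (L : List (Fin n → ℚ))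
    (hsymm : ((↑L : Multiset (Fin n → ℚ)).map (fun v => -v)) = (↑L : Multiset (Fin n → ℚ)))
    (l : (Fin n → ℚ) →ₗ[ℚ] ℚ)
    (J : Multiset (Fin n → ℚ))
    (hJ : J ≤ (↑L : Multiset (Fin n → ℚ)).filter (fun v => l v < 0)) :
    ∃ t : Fin L.length → ℚ, (∀ i, 0 ≤ t i ∧ t i ≤ 1 / 2) ∧
      (-(1 / 2 : ℚ)) • ((↑L : Multiset (Fin n → ℚ)).filter (fun v => 0 < l v)).sum
          - J.sum
        = ∑ i ∈ Finset.univ.filter (fun i : Fin L.length => l (L.get i) ≠ 0),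
            t i • L.get i := by
  set M : Multiset (Fin n → ℚ) := (↑L : Multiset (Fin n → ℚ)) with hM
  set Neg' : Multiset (Fin n → ℚ) := M.filter (fun v => l v < 0) with hNeg
  set Pos : Multiset (Fin n → ℚ) := M.filter (fun v => 0 < l v) with hPos
  -- symmetry: map neg of Neg' is Pos
  have hmapneg : Neg'.map (fun v => -v) = Pos := by
    rw [hNeg, hPos]
    have h1 : M.filter (fun v => l v < 0) = M.filter ((fun v => 0 < l v) ∘ (fun v => -v)) := by
      apply Multiset.filter_congr
      intro v _
      simp [Function.comp, map_neg]
    rw [h1, ← Multiset.filter_map, hsymm]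
  -- the multiset K
  set K : Multiset (Fin n → ℚ) := (Neg' - J) + J.map (fun v => -v) with hK
  have hKle : K ≤ M := by
    have h1 : (Neg' - J) + J.map (fun v => -v) ≤ Neg' + Pos := by
      apply add_le_add
      · exact tsub_le_self
      · rw [← hmapneg]; exact Multiset.map_le_map hJ
    refine le_trans h1 ?_
    rw [hNeg, hPos, Multiset.filter_add_filter]
    have h2 : M.filter (fun v => l v < 0 ∧ 0 < l v) = 0 := by
      rw [Multiset.filter_eq_nil]
      intro v _ hv
      exact absurd hv.2 (asymm hv.1)
    rw [h2, add_zero]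
    exact Multiset.filter_le _ _
  have hKne : ∀ v ∈ K, l v ≠ 0 := by
    intro v hv
    rw [hK, Multiset.mem_add] at hv
    rcases hv with hv | hv
    · have := Multiset.mem_of_le (tsub_le_self (a := Neg') (b := J)) hv
      rw [hNeg, Multiset.mem_filter] at this
      exact ne_of_lt this.2
    · rw [Multiset.mem_map] at hv
      obtain ⟨w, hw, rfl⟩ := hv
      have := Multiset.mem_of_le hJ hw
      rw [Multiset.mem_filter] at this
      have : 0 < l (-w) := by rw [map_neg]; linarith [this.2]
      exact ne_of_gt this
  -- pull K back to indices
  have hLmap : M = (Finset.univ : Finset (Fin L.length)).val.map L.get := by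
    rw [hM]
    have : (Finset.univ : Finset (Fin L.length)).val = ↑(List.finRange L.length) := rfl
    rw [this, Multiset.map_coe, ← List.ofFn_eq_map, List.ofFn_get]
  obtain ⟨u, hu, hum⟩ := aux_le_map _ K (hLmap ▸ hKle)
  have hunodup : u.Nodup := Multiset.nodup_of_le hu Finset.univ.nodup
  set S : Finset (Fin L.length) := ⟨u, hunodup⟩ with hS
  have hmemS : ∀ i ∈ S, l (L.get i) ≠ 0 := by
    intro i hi
    apply hKne
    rw [← hum]
    exact Multiset.mem_map_of_mem _ hi
  refine ⟨fun i => if i ∈ S then 1/2 else 0, ?_, ?_⟩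
  · intro i; by_cases h : i ∈ S <;> simp [h]
  · have hsub : S ⊆ Finset.univ.filter (fun i : Fin L.length => l (L.get i) ≠ 0) := by
      intro i hi
      rw [Finset.mem_filter]
      exact ⟨Finset.mem_univ i, hmemS i hi⟩
    rw [← Finset.sum_subset hsub (by intro i _ hiS; simp [hiS])]
    have hsumS : ∑ i ∈ S, (if i ∈ S then (1/2:ℚ) else 0) • L.get i
        = (1/2 : ℚ) • K.sum := by
      rw [Finset.sum_congr rfl (fun i hi => by rw [if_pos hi]), ← Finset.smul_sum]
      congr 1
      rw [Finset.sum_eq_multiset_sum]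
      exact congrArg Multiset.sum hum
    rw [hsumS]
    have h3 : (Neg' - J).sum = Neg'.sum - J.sum :=
      eq_sub_of_add_eq (by rw [← Multiset.sum_add, tsub_add_cancel_of_le hJ])
    have h4 : (J.map (fun v => -v)).sum = -J.sum := by
      simpa using Multiset.sum_map_neg' J
    have h5 : Pos.sum = -Neg'.sum := by
      rw [← hmapneg]; simpa using Multiset.sum_map_neg' Neg'
    rw [hK, Multiset.sum_add, h3, h4, h5]
    module
end

section
/- Fix an integer n ≥ 1. In the ring ℤ[t, t^{-1}] of Laurent polynomials, the ℤ-submodule spanned by the set { t^w : 0 ≤ w ≤ n } ∪ { t^a (t − 1)^n : a ∈ ℤ, a < 0 } ∪ { t^{b−n} (t − 1)^n : b ∈ ℤ, b > n } is all of ℤ[t, t^{-1}]. -/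
open LaurentPolynomial

private lemma key_expand (n : ℕ) (c : ℤ) :
    T c * (T 1 - 1 : LaurentPolynomial ℤ) ^ n
      = ∑ m ∈ Finset.range (n + 1), ((-1 : ℤ) ^ (m + n) * n.choose m) • T (c + m) := by
  rw [sub_pow, Finset.mul_sum]
  refine Finset.sum_congr rfl fun m hm => ?_
  have hTm : (T 1 : LaurentPolynomial ℤ) ^ m = T (m : ℤ) := by
    rw [T_pow]; norm_num
  rw [T_add, zsmul_eq_mul, hTm]
  push_cast
  ring

theorem laurent_span_window_and_koszul (n : ℕ) (hn : 1 ≤ n) :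
    Submodule.span ℤ
        ({ x : LaurentPolynomial ℤ | ∃ w : ℤ, 0 ≤ w ∧ w ≤ (n : ℤ) ∧ x = T w } ∪
         { x : LaurentPolynomial ℤ | ∃ a : ℤ, a < 0 ∧ x = T a * (T 1 - 1) ^ n } ∪
         { x : LaurentPolynomial ℤ | ∃ b : ℤ, (n : ℤ) < b ∧ x = T (b - n) * (T 1 - 1) ^ n })
      = ⊤ := by
  set G : Set (LaurentPolynomial ℤ) :=
    ({ x : LaurentPolynomial ℤ | ∃ w : ℤ, 0 ≤ w ∧ w ≤ (n : ℤ) ∧ x = T w } ∪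
     { x : LaurentPolynomial ℤ | ∃ a : ℤ, a < 0 ∧ x = T a * (T 1 - 1) ^ n } ∪
     { x : LaurentPolynomial ℤ | ∃ b : ℤ, (n : ℤ) < b ∧ x = T (b - n) * (T 1 - 1) ^ n }) with hG
  set S : Submodule ℤ (LaurentPolynomial ℤ) := Submodule.span ℤ G with hS
  have hwin : ∀ w : ℤ, 0 ≤ w → w ≤ (n : ℤ) → T w ∈ S := fun w h1 h2 =>
    Submodule.subset_span (Or.inl (Or.inl ⟨w, h1, h2, rfl⟩))
  have hneg' : ∀ a : ℤ, a < 0 → T a * (T 1 - 1) ^ n ∈ S := fun a ha =>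
    Submodule.subset_span (Or.inl (Or.inr ⟨a, ha, rfl⟩))
  have hpos' : ∀ b : ℤ, (n : ℤ) < b → T (b - n) * (T 1 - 1) ^ n ∈ S := fun b hb =>
    Submodule.subset_span (Or.inr ⟨b, hb, rfl⟩)
  -- negative powers
  have hneg : ∀ k : ℕ, T (-(k + 1) : ℤ) ∈ S := by
    intro k
    induction k using Nat.strong_induction_on with
    | _ k ih =>
      have H := hneg' (-(k + 1)) (by omega)
      rw [key_expand] at H
      have h0 : (0 : ℕ) ∈ Finset.range (n + 1) := Finset.mem_range.mpr (Nat.succ_pos n)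
      rw [← Finset.sum_erase_add _ _ h0] at H
      have herase :
          (∑ m ∈ (Finset.range (n + 1)).erase 0,
            ((-1 : ℤ) ^ (m + n) * n.choose m) • T (-(k + 1 : ℤ) + m)) ∈ S := by
        refine Submodule.sum_mem _ fun m hm => ?_
        obtain ⟨hm0, hmr⟩ := Finset.mem_erase.mp hm
        have hmn : m ≤ n := by rw [Finset.mem_range] at hmr; omega
        refine Submodule.smul_mem _ _ ?_
        rcases le_or_gt 0 (-(k + 1 : ℤ) + m) with h | h
        · exact hwin _ h (by omega)
        · have hmk : m ≤ k := by omega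
          have hidx : (-(k + 1 : ℤ) + m) = -(((k - m : ℕ) : ℤ) + 1) := by
            push_cast [hmk]; omega
          rw [hidx]
          exact ih (k - m) (by omega)
      have H2 := Submodule.sub_mem _ H herase
      rw [add_sub_cancel_left] at H2
      have H3 : ((-1 : ℤ) ^ n) • T (-(k + 1) : ℤ) ∈ S := by
        simpa using H2
      have H4 := Submodule.smul_mem _ ((-1 : ℤ) ^ n) H3
      rwa [smul_smul, ← pow_add, Even.neg_one_pow ⟨n, rfl⟩, one_smul] at H4
  -- powers above n
  have hpos : ∀ k : ℕ, T ((n : ℤ) + k + 1) ∈ S := by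
    intro k
    induction k using Nat.strong_induction_on with
    | _ k ih =>
      have H := hpos' ((n : ℤ) + k + 1) (by omega)
      rw [key_expand] at H
      have h0 : n ∈ Finset.range (n + 1) := Finset.mem_range.mpr (Nat.lt_succ_self n)
      rw [← Finset.sum_erase_add _ _ h0] at H
      have herase :
          (∑ m ∈ (Finset.range (n + 1)).erase n,
            ((-1 : ℤ) ^ (m + n) * n.choose m) • T ((n : ℤ) + k + 1 - n + m)) ∈ S := by
        refine Submodule.sum_mem _ fun m hm => ?_
        obtain ⟨hm0, hmr⟩ := Finset.mem_erase.mp hm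
        have hmn : m < n := by rw [Finset.mem_range] at hmr; omega
        refine Submodule.smul_mem _ _ ?_
        rcases le_or_gt ((n : ℤ) + k + 1 - n + m) n with h | h
        · exact hwin _ (by omega) h
        · have hmk : n ≤ k + m := by omega
          have hidx : ((n : ℤ) + k + 1 - n + m) = (n : ℤ) + ((k + m - n : ℕ) : ℤ) + 1 := by
            push_cast [hmk]; omega
          rw [hidx]
          exact ih (k + m - n) (by omega)
      have H2 := Submodule.sub_mem _ H herase
      rw [add_sub_cancel_left] at H2
      have hco : ((-1 : ℤ) ^ (n + n) * n.choose n) = 1 := by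
        rw [Even.neg_one_pow ⟨n, rfl⟩, Nat.choose_self]; ring
      rw [hco, one_smul] at H2
      have hidx2 : ((n : ℤ) + k + 1 - n + n) = (n : ℤ) + k + 1 := by ring
      rwa [hidx2] at H2
  -- all powers
  have hT : ∀ w : ℤ, T w ∈ S := by
    intro w
    rcases le_or_gt 0 w with h | h
    · rcases le_or_gt w (n : ℤ) with h2 | h2
      · exact hwin w h h2
      · obtain ⟨k, rfl⟩ : ∃ k : ℕ, w = (n : ℤ) + k + 1 := ⟨(w - n - 1).toNat, by omega⟩
        exact hpos k
    · obtain ⟨k, rfl⟩ : ∃ k : ℕ, w = -((k : ℤ) + 1) := ⟨(-w - 1).toNat, by omega⟩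
      exact hneg k
  rw [eq_top_iff]
  rintro f -
  induction f using LaurentPolynomial.induction_on' with
  | add p q hp hq => exact Submodule.add_mem _ hp hq
  | C_mul_T m a =>
    have : (C a : LaurentPolynomial ℤ) * T m = a • T m := by
      rw [zsmul_eq_mul]
      norm_cast
    rw [this]
    exact Submodule.smul_mem _ a (hT m)
end
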